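/- arXiv:1303.2242 — 5 statements merged into one kernel-verified Lean document; each statement's English description precedes it below -/
import Mathlib

section
/- Let L be the Laplacian of a directed graph on N nodes with row-stochastic-normalized adjacency (each nonzero row of the adjacency matrix has entries 1/|N_i| on the neighbors of i), let k ∈ [0,1]^N, K₁ = diag(k_i²), K₂ = diag((1-k_i)²), and M = -(K₁ + K₂ L). Then M is Hurwitz (all eigenvalues have strictly negative real part) if and only if there exists a minimal root set R(L) of the graph such that k_j > 0 for all j ∈ R(L). -/
open Matrix

/-- `M` is Hurwitz: every (complex) eigenvalue has strictly negative real part. -/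
def IsHurwitz {N : ℕ} (M : Matrix (Fin N) (Fin N) ℝ) : Prop :=
  ∀ μ ∈ (M.map (Complex.ofReal)).charpoly.roots, μ.re < 0

/-- `S` is a root set of the directed graph with neighbor sets `Nbr`:
from every node there is a directed path (along edges `i → j` for `j ∈ Nbr i`)
to some node of `S`. -/
def IsRootSet {N : ℕ} (Nbr : Fin N → Finset (Fin N)) (S : Finset (Fin N)) : Prop :=
  ∀ i : Fin N, ∃ j ∈ S, Relation.ReflTransGen (fun a b => b ∈ Nbr a) i j

/-- A minimal root set: a root set of smallest cardinality. -/
def IsMinimalRootSet {N : ℕ} (Nbr : Fin N → Finset (Fin N)) (S : Finset (Fin N)) : Prop :=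
  IsRootSet Nbr S ∧ ∀ T : Finset (Fin N), IsRootSet Nbr T → S.card ≤ T.card

/-!
`M = -B` with `B = K₁ + K₂ L`. Since `A ≥ 0`, the diagonal entry `k_i² + (1-k_i)² ∑_{j≠i} A_ij`
of `B` dominates its off-diagonal row sum by `k_i² ≥ 0`, so by Gershgorin every eigenvalue of `B`
has nonnegative real part and the only one on the imaginary axis can be `0`: `M` is Hurwitz iff
`B` is invertible. A kernel vector of `B` attains its positive maximum on a set closed under
following edges, on which every `k_i` vanishes (maximum principle); conversely, a closed set
with `k = 0` is a diagonal block of `B` with zero row sums, so `B` is singular. Finally, a root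
set must meet every closed set, and moving each root of a minimal root set to a reachable node
with `k > 0` keeps it a minimal root set.
-/

open Finset

theorem Complex.eq_zero_of_mem_closedBall_of_re_nonneg {z : ℂ} {c r : ℝ} (hrc : r ≤ c)
    (hz : z ∈ Metric.closedBall (-(c : ℂ)) r) (hre : 0 ≤ z.re) : z = 0 := by
  have hdist : ‖z + c‖ ≤ c := by
    simpa [mem_closedBall_iff_norm] using (mem_closedBall_iff_norm.1 hz).trans hrc
  have hsq : (z.re + c) ^ 2 + z.im ^ 2 ≤ c ^ 2 := by
    have h := pow_le_pow_left₀ (norm_nonneg _) hdist 2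
    rwa [Complex.sq_norm, Complex.normSq_apply, Complex.add_re, Complex.add_im,
      Complex.ofReal_re, Complex.ofReal_im, add_zero, ← sq, ← sq] at h
  have hc : 0 ≤ c := (norm_nonneg _).trans hdist
  apply Complex.ext <;> simp only [Complex.zero_re, Complex.zero_im] <;>
    nlinarith [sq_nonneg z.im, sq_nonneg z.re]

theorem Matrix.isRoot_charpoly_zero_iff {n R : Type*} [Fintype n] [DecidableEq n] [CommRing R]
    (A : Matrix n n R) : A.charpoly.IsRoot 0 ↔ A.det = 0 := by
  rw [Polynomial.IsRoot, ← Polynomial.coeff_zero_eq_eval_zero, det_eq_sign_charpoly_coeff]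
  simp

theorem isHurwitz_neg_iff_det_ne_zero {N : ℕ} (B : Matrix (Fin N) (Fin N) ℝ)
    (hB : ∀ i, ∑ j ∈ univ.erase i, |B i j| ≤ B i i) : IsHurwitz (-B) ↔ B.det ≠ 0 := by
  set Bc := (-B).map Complex.ofReal
  have hroot_iff : ∀ μ, μ ∈ Bc.charpoly.roots ↔ Bc.charpoly.IsRoot μ := fun μ =>
    Polynomial.mem_roots (charpoly_monic _).ne_zero
  have hzero : Bc.charpoly.IsRoot 0 ↔ B.det = 0 := by
    rw [Matrix.isRoot_charpoly_zero_iff, show Bc = Complex.ofRealHom.mapMatrix (-B) from rfl,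
      ← RingHom.map_det]
    simp [det_neg]
  constructor
  · intro hH hdet
    simpa using hH 0 ((hroot_iff 0).2 (hzero.2 hdet))
  · intro hdet μ hμ
    by_contra! hre
    have heig : Module.End.HasEigenvalue (toLin' Bc) μ := by
      rw [Module.End.hasEigenvalue_iff_isRoot_charpoly, charpoly_toLin']
      exact (hroot_iff μ).1 hμ
    obtain ⟨i, hi⟩ := eigenvalue_mem_ball heig
    have hμ0 : μ = 0 := by
      refine Complex.eq_zero_of_mem_closedBall_of_re_nonneg (hB i) ?_ hre
      simpa [Bc] using hi
    exact hdet (hzero.1 (hμ0 ▸ (hroot_iff μ).1 hμ))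

namespace Matrix

variable {ι : Type*} [Fintype ι] [DecidableEq ι]

noncomputable def investedLaplacian (k : ι → ℝ) (A : Matrix ι ι ℝ) : Matrix ι ι ℝ :=
  diagonal (fun i => k i ^ 2) + diagonal (fun i => (1 - k i) ^ 2) *
    (diagonal (fun i => ∑ j, A i j) - A)

variable (k : ι → ℝ) (A : Matrix ι ι ℝ)

theorem investedLaplacian_apply (i j : ι) :
    investedLaplacian k A i j =
      (if i = j then k i ^ 2 + (1 - k i) ^ 2 * ∑ l, A i l else 0) - (1 - k i) ^ 2 * A i j := by
  simp only [investedLaplacian, add_apply, diagonal_mul, sub_apply, diagonal_apply]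
  split_ifs <;> ring

theorem investedLaplacian_mulVec_apply (x : ι → ℝ) (i : ι) :
    (investedLaplacian k A *ᵥ x) i = k i ^ 2 * x i + (1 - k i) ^ 2 * ∑ j, A i j * (x i - x j) := by
  have hsum : ∑ j, A i j * (x i - x j) = (∑ j, A i j) * x i - ∑ j, A i j * x j := by
    rw [sum_mul, ← sum_sub_distrib]
    simp only [mul_sub]
  simp only [mulVec, dotProduct, investedLaplacian_apply, sub_mul, ite_mul, zero_mul,
    sum_sub_distrib, sum_ite_eq, mem_univ, if_true, hsum, mul_assoc,
    ← mul_sum]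
  ring

theorem sum_abs_investedLaplacian_le (hA : ∀ i j, 0 ≤ A i j) (i : ι) :
    ∑ j ∈ univ.erase i, |investedLaplacian k A i j| ≤ investedLaplacian k A i i := by
  have hoff : ∀ j ∈ univ.erase i, |investedLaplacian k A i j| = (1 - k i) ^ 2 * A i j := by
    intro j hj
    rw [investedLaplacian_apply, if_neg (ne_of_mem_erase hj).symm, zero_sub, abs_neg,
      abs_of_nonneg (mul_nonneg (sq_nonneg _) (hA i j))]
  rw [sum_congr rfl hoff, ← mul_sum, investedLaplacian_apply, if_pos rfl,
    ← add_sum_erase _ _ (mem_univ i)]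
  nlinarith [sq_nonneg (k i)]

variable {k A}

theorem investedLaplacian_max_principle (hA : ∀ i j, 0 ≤ A i j) {x : ι → ℝ}
    (hx : investedLaplacian k A *ᵥ x = 0) {i : ι} (hmax : ∀ j, x j ≤ x i) (hpos : 0 < x i) :
    k i = 0 ∧ ∀ j, A i j ≠ 0 → x j = x i := by
  have hrow := congrFun hx i
  rw [investedLaplacian_mulVec_apply, Pi.zero_apply] at hrow
  have hterm : ∀ j ∈ univ, 0 ≤ A i j * (x i - x j) := fun j _ =>
    mul_nonneg (hA i j) (sub_nonneg.2 (hmax j))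
  have hsum := sum_nonneg hterm
  have hki : k i = 0 := by
    have : k i ^ 2 * x i = 0 := by nlinarith [sq_nonneg (k i), sq_nonneg (1 - k i)]
    simpa [hpos.ne'] using this
  refine ⟨hki, fun j hj => ?_⟩
  rw [hki] at hrow
  have hzero := (sum_eq_zero_iff_of_nonneg hterm).1 (by linarith) j (mem_univ j)
  linarith [(mul_eq_zero.1 hzero).resolve_left hj]

theorem exists_closed_of_det_investedLaplacian_eq_zero (hA : ∀ i j, 0 ≤ A i j)
    (hdet : (investedLaplacian k A).det = 0) :
    ∃ T : Finset ι, T.Nonempty ∧ (∀ i ∈ T, ∀ j, A i j ≠ 0 → j ∈ T) ∧ ∀ i ∈ T, k i = 0 := by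
  obtain ⟨x, hx0, hx⟩ := exists_mulVec_eq_zero_iff.2 hdet
  obtain ⟨y, hy, i₀, hi₀⟩ : ∃ y, investedLaplacian k A *ᵥ y = 0 ∧ ∃ i, 0 < y i := by
    obtain ⟨i, hi⟩ := Function.ne_iff.1 hx0
    rcases (Ne.lt_or_gt hi) with hneg | hpos
    · exact ⟨-x, by rw [mulVec_neg, hx, neg_zero], i, by simpa using hneg⟩
    · exact ⟨x, hx, i, hpos⟩
  obtain ⟨m, -, hm⟩ := exists_max_image univ y ⟨i₀, mem_univ _⟩
  have hmax : ∀ i, y i = y m → ∀ j, y j ≤ y i := fun i hi j => hi ▸ hm j (mem_univ j)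
  have hpos : 0 < y m := hi₀.trans_le (hm i₀ (mem_univ _))
  refine ⟨univ.filter (fun i => y i = y m), ⟨m, by simp⟩, ?_, ?_⟩
  · intro i hi j hj
    simp only [mem_filter, mem_univ, true_and] at hi ⊢
    rw [(investedLaplacian_max_principle hA hy (hmax i hi) (hi ▸ hpos)).2 j hj, hi]
  · intro i hi
    simp only [mem_filter, mem_univ, true_and] at hi
    exact (investedLaplacian_max_principle hA hy (hmax i hi) (hi ▸ hpos)).1

theorem det_investedLaplacian_eq_zero_of_closed {T : Finset ι} (hT : T.Nonempty)
    (hclosed : ∀ i ∈ T, ∀ j, A i j ≠ 0 → j ∈ T) (hk : ∀ i ∈ T, k i = 0) :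
    (investedLaplacian k A).det = 0 := by
  have hblock : ∀ i ∈ T, ∀ j ∉ T, investedLaplacian k A i j = 0 := by
    intro i hi j hj
    rw [investedLaplacian_apply, if_neg (by rintro rfl; exact hj hi),
      not_ne_iff.1 (fun h => hj (hclosed i hi j h))]
    ring
  rw [twoBlockTriangular_det' _ (· ∈ T) hblock]
  obtain ⟨t, ht⟩ := hT
  have hrow : ∀ i ∈ T, ∑ j ∈ T, investedLaplacian k A i j = 0 := by
    intro i hi
    have hsupp : ∑ j ∈ T, A i j = ∑ j, A i j :=
      sum_subset (subset_univ T) fun j _ hj => not_ne_iff.1 fun h => hj (hclosed i hi j h)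
    simp only [investedLaplacian_apply, sum_sub_distrib, sum_ite_eq, if_pos hi,
      hk i hi, ← mul_sum, hsupp]
    ring
  have hsing : (toSquareBlockProp (investedLaplacian k A) (· ∈ T)).det = 0 := by
    refine exists_mulVec_eq_zero_iff.1 ⟨fun _ => 1, fun h => one_ne_zero (congrFun h ⟨t, ht⟩), ?_⟩
    funext i
    simp only [mulVec, dotProduct, mul_one, Pi.zero_apply, toSquareBlockProp, toBlock_apply]
    rw [← sum_subtype T (fun _ => Iff.rfl) (investedLaplacian k A i)]
    exact hrow i i.2
  exact mul_eq_zero_of_left (by convert hsing) _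

end Matrix

section RootSet

variable {N : ℕ} {Nbr : Fin N → Finset (Fin N)}

theorem IsRootSet.exists_mem_of_closed {S T : Finset (Fin N)} (hS : IsRootSet Nbr S)
    (hT : ∀ i ∈ T, Nbr i ⊆ T) {i : Fin N} (hi : i ∈ T) : ∃ j ∈ S, j ∈ T := by
  obtain ⟨j, hjS, hij⟩ := hS i
  refine ⟨j, hjS, ?_⟩
  clear hjS
  induction hij with
  | refl => exact hi
  | tail _ hstep ih => exact hT _ ih hstep

theorem exists_isMinimalRootSet (Nbr : Fin N → Finset (Fin N)) :
    ∃ S, IsMinimalRootSet Nbr S := by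
  classical
  obtain ⟨S, hS, hmin⟩ := (univ.powerset.filter (IsRootSet Nbr)).exists_min_image card
    ⟨univ, by simpa [IsRootSet] using fun i => ⟨i, Relation.ReflTransGen.refl⟩⟩
  simp only [mem_filter, mem_powerset, subset_univ, true_and] at hS hmin
  exact ⟨S, hS, hmin⟩

theorem exists_isMinimalRootSet_forall {P : Fin N → Prop}
    (hP : ∀ i, ∃ j, Relation.ReflTransGen (fun a b => b ∈ Nbr a) i j ∧ P j) :
    ∃ S, IsMinimalRootSet Nbr S ∧ ∀ j ∈ S, P j := by
  classical
  choose p hreach hp using hP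
  obtain ⟨S, hS, hmin⟩ := exists_isMinimalRootSet Nbr
  refine ⟨S.image p, ⟨fun i => ?_, fun T hT => card_image_le.trans (hmin T hT)⟩, ?_⟩
  · obtain ⟨s, hs, his⟩ := hS i
    exact ⟨p s, mem_image_of_mem p hs, his.trans (hreach s)⟩
  · simp only [mem_image]
    rintro _ ⟨s, -, rfl⟩
    exact hp s

end RootSet

theorem hurwitz_iff_invested_minimal_root_set_general
    (N : ℕ)
    (Nbr : Fin N → Finset (Fin N))
    (k : Fin N → ℝ) (hk : ∀ i, k i ∈ Set.Icc (0 : ℝ) 1)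
    (A L K₁ K₂ M : Matrix (Fin N) (Fin N) ℝ)
    (hA : ∀ i j, A i j = if j ∈ Nbr i then ((Nbr i).card : ℝ)⁻¹ else 0)
    (hL : L = Matrix.diagonal (fun i => ∑ j, A i j) - A)
    (hK₁ : K₁ = Matrix.diagonal (fun i => (k i) ^ 2))
    (hK₂ : K₂ = Matrix.diagonal (fun i => (1 - k i) ^ 2))
    (hM : M = -(K₁ + K₂ * L)) :
    IsHurwitz M ↔
      ∃ S : Finset (Fin N), IsMinimalRootSet Nbr S ∧ ∀ j ∈ S, 0 < k j := by
  classical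
  have hA_nonneg : ∀ i j, 0 ≤ A i j := fun i j => by
    rw [hA]
    split_ifs <;> positivity
  have hA_ne_zero : ∀ i j, A i j ≠ 0 ↔ j ∈ Nbr i := fun i j => by
    rw [hA]
    split_ifs with h
    · simpa [h] using card_ne_zero_of_mem h
    · simpa using h
  have hM' : M = -investedLaplacian k A := by rw [hM, hK₁, hK₂, hL, investedLaplacian]
  rw [hM', isHurwitz_neg_iff_det_ne_zero _ (sum_abs_investedLaplacian_le k A hA_nonneg)]
  constructor
  · intro hdet
    refine exists_isMinimalRootSet_forall fun i => ?_
    by_contra! hzero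
    let T := univ.filter (Relation.ReflTransGen (fun a b => b ∈ Nbr a) i)
    refine hdet (det_investedLaplacian_eq_zero_of_closed (T := T)
      ⟨i, mem_filter.2 ⟨mem_univ i, .refl⟩⟩ ?_ ?_)
    · intro a ha b hb
      simp only [T, mem_filter, mem_univ, true_and] at ha ⊢
      exact ha.tail ((hA_ne_zero a b).1 hb)
    · intro j hj
      simp only [T, mem_filter, mem_univ, true_and] at hj
      exact le_antisymm (hzero j hj) (hk j).1
  · rintro ⟨S, hS, hpos⟩ hdet
    obtain ⟨T, ⟨i, hi⟩, hclosed, hzero⟩ :=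
      exists_closed_of_det_investedLaplacian_eq_zero hA_nonneg hdet
    obtain ⟨j, hjS, hjT⟩ :=
      hS.1.exists_mem_of_closed (fun a ha b hb => hclosed a ha b ((hA_ne_zero a b).2 hb)) hi
    exact (hpos j hjS).ne' (hzero j hjT)

/-- Theorem 1: with `A` the row-normalized adjacency matrix of the social graph
with neighbor sets `Nbr`, `L = diag(A·1) - A` the Laplacian, `k ∈ [0,1]^N`,
`K₁ = diag(k_i²)`, `K₂ = diag((1-k_i)²)`, the matrix `M = -(K₁ + K₂ L)` is
Hurwitz if and only if there is a minimal root set `R(L)` on which all the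
investments `k_j` are strictly positive. -/
theorem hurwitz_iff_invested_minimal_root_set
    (N : ℕ) (hN : 0 < N)
    (Nbr : Fin N → Finset (Fin N)) (hirr : ∀ i, i ∉ Nbr i)
    (k : Fin N → ℝ) (hk : ∀ i, k i ∈ Set.Icc (0 : ℝ) 1)
    (A L K₁ K₂ M : Matrix (Fin N) (Fin N) ℝ)
    (hA : ∀ i j, A i j = if j ∈ Nbr i then ((Nbr i).card : ℝ)⁻¹ else 0)
    (hL : L = Matrix.diagonal (fun i => ∑ j, A i j) - A)
    (hK₁ : K₁ = Matrix.diagonal (fun i => (k i) ^ 2))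
    (hK₂ : K₂ = Matrix.diagonal (fun i => (1 - k i) ^ 2))
    (hM : M = -(K₁ + K₂ * L)) :
    IsHurwitz M ↔
      ∃ S : Finset (Fin N), IsMinimalRootSet Nbr S ∧ ∀ j ∈ S, 0 < k j :=
  hurwitz_iff_invested_minimal_root_set_general N Nbr k hk A L K₁ K₂ M hA hL hK₁ hK₂ hM
end

section
/- Let S(k_R, k_M) = F_M(k_R, k_M) - F_R(k_R) with F_M, F_R as in the mean-field migration model with parameters β, c > 0. Then the selection gradient g(k_R) = ∂S/∂k_M evaluated at k_M = k_R equals -exp[-G(k_R,k_R)] · ( k_R(1-k_R)(1 + β²(k_R - 1)) / (2(2k_R² - 2k_R + 1)²) + 2 c k_R ), where G(k_R,k_M) = (k_M² + (1-k_M)²β²(1-k_R))/(4(2k_M² - 2k_M + 1)) + c k_M². -/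
lemma two_mul_sq_sub_two_mul_add_one_pos (x : ℝ) : 0 < 2 * x ^ 2 - 2 * x + 1 := by
  nlinarith [sq_nonneg (2 * x - 1)]

/-- After clearing the denominator the numerator of the quotient rule collapses to
`2x(1-x)(1-a)`. -/
lemma hasDerivAt_sq_add_sq_mul_div (a x : ℝ) :
    HasDerivAt (fun y => (y ^ 2 + (1 - y) ^ 2 * a) / (4 * (2 * y ^ 2 - 2 * y + 1)))
      (x * (1 - x) * (1 - a) / (2 * (2 * x ^ 2 - 2 * x + 1) ^ 2)) x := by
  have hq := (two_mul_sq_sub_two_mul_add_one_pos x).ne'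
  have hnum : HasDerivAt (fun y => y ^ 2 + (1 - y) ^ 2 * a) (2 * x - 2 * (1 - x) * a) x :=
    ((hasDerivAt_pow 2 x).add ((((hasDerivAt_id x).const_sub 1).pow 2).mul_const a)).congr_deriv
      (by simp only [id, Nat.cast_ofNat]; ring)
  have hden : HasDerivAt (fun y => 4 * (2 * y ^ 2 - 2 * y + 1)) (4 * (4 * x - 2)) x :=
    ((((hasDerivAt_pow 2 x).const_mul 2).sub
      ((hasDerivAt_id x).const_mul 2)).add_const 1).const_mul 4 |>.congr_deriv
      (by simp only [Nat.cast_ofNat]; ring)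
  refine (hnum.div hden (by positivity)).congr_deriv ?_
  field_simp
  ring

theorem selection_gradient_formula_general
    (β c : ℝ)
    (G : ℝ → ℝ → ℝ)
    (hG : ∀ kR kM, G kR kM =
      (kM ^ 2 + (1 - kM) ^ 2 * β ^ 2 * (1 - kR)) / (4 * (2 * kM ^ 2 - 2 * kM + 1))
        + c * kM ^ 2)
    (S : ℝ → ℝ → ℝ)
    (hS : ∀ kR kM, S kR kM = Real.exp (-G kR kM) - Real.exp (-G kR kR)) :
    ∀ kR : ℝ, HasDerivAt (fun kM => S kR kM)
      (-Real.exp (-G kR kR) *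
        (kR * (1 - kR) * (1 + β ^ 2 * (kR - 1))
            / (2 * (2 * kR ^ 2 - 2 * kR + 1) ^ 2)
          + 2 * c * kR)) kR := by
  intro kR
  have hGkR : HasDerivAt (G kR)
      (kR * (1 - kR) * (1 + β ^ 2 * (kR - 1)) / (2 * (2 * kR ^ 2 - 2 * kR + 1) ^ 2)
        + 2 * c * kR) kR := by
    have hG' : G kR = fun kM =>
        (kM ^ 2 + (1 - kM) ^ 2 * (β ^ 2 * (1 - kR))) / (4 * (2 * kM ^ 2 - 2 * kM + 1))
          + c * kM ^ 2 := by
      funext kM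
      rw [hG, mul_assoc _ (β ^ 2)]
    rw [hG']
    exact ((hasDerivAt_sq_add_sq_mul_div _ kR).add
      ((hasDerivAt_pow 2 kR).const_mul c)).congr_deriv (by simp only [Nat.cast_ofNat]; ring)
  simp only [hS]
  exact (hGkR.neg.exp.sub_const _).congr_deriv (by rw [Pi.neg_apply]; ring)

/-- The selection gradient of the mean-field migration model: with
`G(k_R,k_M) = (k_M² + (1-k_M)²β²(1-k_R))/(4(2k_M² - 2k_M + 1)) + c k_M²`,
`S(k_R,k_M) = exp(-G(k_R,k_M)) - exp(-G(k_R,k_R))`, the derivative of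
`k_M ↦ S(k_R,k_M)` at `k_M = k_R` equals
`-exp(-G(k_R,k_R)) · ( k_R(1-k_R)(1+β²(k_R-1))/(2(2k_R²-2k_R+1)²) + 2ck_R )`. -/
theorem selection_gradient_formula
    (β c : ℝ) (hβ : 0 < β) (hc : 0 < c)
    (G : ℝ → ℝ → ℝ)
    (hG : ∀ kR kM, G kR kM =
      (kM ^ 2 + (1 - kM) ^ 2 * β ^ 2 * (1 - kR)) / (4 * (2 * kM ^ 2 - 2 * kM + 1))
        + c * kM ^ 2)
    (S : ℝ → ℝ → ℝ)
    (hS : ∀ kR kM, S kR kM = Real.exp (-G kR kM) - Real.exp (-G kR kR)) :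
    ∀ kR : ℝ, HasDerivAt (fun kM => S kR kM)
      (-Real.exp (-G kR kR) *
        (kR * (1 - kR) * (1 + β ^ 2 * (kR - 1))
            / (2 * (2 * kR ^ 2 - 2 * kR + 1) ^ 2)
          + 2 * c * kR)) kR :=
  selection_gradient_formula_general β c G hG S hS
end

section
/- The cubic polynomial q(k) = k(3 - 10k + 6k²) is strictly positive for k ∈ (0, (5-√7)/6) and its roots in [0,1] are exactly 0 and (5-√7)/6. Consequently, for β² (1-k) > 1, the branching expression (β²(1-k) - 1)·k·(3 - 10k + 6k²)/(2(1 - 2k + 2k²)³) is strictly positive if and only if k ∈ (0, (5-√7)/6), given that additionally 1 - 1/β² > (5-√7)/6. -/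
/-- Branching condition: the cubic `q(k) = k(3 - 10k + 6k²)` is strictly
positive on `(0, (5-√7)/6)`, its roots in `[0,1]` are exactly `0` and
`(5-√7)/6`, and, assuming `β > 2` (so `1 - 1/β² > (5-√7)/6`), for `k` with
`β²(1-k) > 1` the branching expression
`(β²(1-k)-1)·k·(3-10k+6k²)/(2(1-2k+2k²)³)` is strictly positive iff
`k ∈ (0, (5-√7)/6)`. -/
theorem branching_condition_interval
    (β : ℝ) (hβ : 2 < β) (hβ' : (5 - Real.sqrt 7) / 6 < 1 - 1 / β ^ 2) :
    (∀ k : ℝ, k ∈ Set.Ioo (0 : ℝ) ((5 - Real.sqrt 7) / 6) →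
        0 < k * (3 - 10 * k + 6 * k ^ 2)) ∧
    ({k : ℝ | k ∈ Set.Icc (0 : ℝ) 1 ∧ k * (3 - 10 * k + 6 * k ^ 2) = 0}
        = {0, (5 - Real.sqrt 7) / 6}) ∧
    (∀ k : ℝ, k ∈ Set.Icc (0 : ℝ) 1 → 1 < β ^ 2 * (1 - k) →
      (0 < (β ^ 2 * (1 - k) - 1) * k * (3 - 10 * k + 6 * k ^ 2)
          / (2 * (1 - 2 * k + 2 * k ^ 2) ^ 3) ↔
        k ∈ Set.Ioo (0 : ℝ) ((5 - Real.sqrt 7) / 6))) := by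
  have hs : Real.sqrt 7 ^ 2 = 7 := Real.sq_sqrt (by norm_num)
  have hsn : 0 ≤ Real.sqrt 7 := Real.sqrt_nonneg 7
  have hs2 : 2 < Real.sqrt 7 := by nlinarith
  have hs3 : Real.sqrt 7 < 3 := by nlinarith
  -- the quadratic factor is positive strictly left of the root
  have hq_pos : ∀ k : ℝ, k < (5 - Real.sqrt 7) / 6 → 0 < 3 - 10 * k + 6 * k ^ 2 := by
    intro k hk
    nlinarith [sq_nonneg (6 * k - 5 + Real.sqrt 7)]
  -- the quadratic factor is nonpositive on [root, 1]
  have hq_nonpos : ∀ k : ℝ, (5 - Real.sqrt 7) / 6 ≤ k → k ≤ 1 →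
      3 - 10 * k + 6 * k ^ 2 ≤ 0 := by
    intro k h1 h2
    nlinarith [mul_nonneg (by linarith : (0:ℝ) ≤ 6 * k - 5 + Real.sqrt 7)
      (by nlinarith : (0:ℝ) ≤ 5 + Real.sqrt 7 - 6 * k)]
  refine ⟨?_, ?_, ?_⟩
  · rintro k ⟨hk0, hkr⟩
    exact mul_pos hk0 (hq_pos k hkr)
  · ext k
    simp only [Set.mem_setOf_eq, Set.mem_Icc, Set.mem_insert_iff, Set.mem_singleton_iff]
    constructor
    · rintro ⟨⟨h0, h1⟩, heq⟩
      rcases mul_eq_zero.1 heq with h | h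
      · exact Or.inl h
      · right
        have hfac : (k - (5 - Real.sqrt 7) / 6) * (k - (5 + Real.sqrt 7) / 6) = 0 := by
          linear_combination h / 6 - hs / 36
        rcases mul_eq_zero.1 hfac with h' | h'
        · linarith [sub_eq_zero.1 h']
        · have := sub_eq_zero.1 h'
          nlinarith
    · rintro (rfl | rfl)
      · norm_num
      · refine ⟨⟨by nlinarith, by nlinarith⟩, ?_⟩
        linear_combination ((5 - Real.sqrt 7) / 36) * hs
  · intro k hk hβk
    have hden : 0 < 2 * (1 - 2 * k + 2 * k ^ 2) ^ 3 := by
      have h12 : (0:ℝ) < 1 - 2 * k + 2 * k ^ 2 := by nlinarith [sq_nonneg (1 - 2 * k)]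
      positivity
    have hnum : 0 < β ^ 2 * (1 - k) - 1 := by linarith
    constructor
    · intro h
      have ha : 0 < (β ^ 2 * (1 - k) - 1) * k * (3 - 10 * k + 6 * k ^ 2) :=
        (div_pos_iff_of_pos_right hden).1 h
      have hkq : 0 < k * (3 - 10 * k + 6 * k ^ 2) := by nlinarith
      have hk0 : 0 < k := by
        rcases lt_or_eq_of_le hk.1 with h' | h'
        · exact h'
        · exfalso; rw [← h'] at hkq; norm_num at hkq
      have hq2 : 0 < 3 - 10 * k + 6 * k ^ 2 := by nlinarith
      refine ⟨hk0, ?_⟩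
      by_contra hle
      push_neg at hle
      linarith [hq_nonpos k hle hk.2]
    · rintro ⟨hk0, hkr⟩
      exact div_pos (mul_pos (mul_pos hnum hk0) (hq_pos k hkr)) hden
end

section
/- For the singular strategy k* = 0 of the mean-field migration adaptive dynamics, the convergence-stability derivative satisfies g'(0) = exp(-β²/4)·(β² - 1 - 4c)/2; hence k* = 0 is convergent stable (g'(0) < 0) if and only if c > (β² - 1)/4. -/
open Filter Topology

theorem hasDerivAt_sub_mul_of_continuousAt {𝕜 : Type*} [NontriviallyNormedField 𝕜]
    {φ : 𝕜 → 𝕜} {x : 𝕜} (hφ : ContinuousAt φ x) :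
    HasDerivAt (fun y => (y - x) * φ y) (φ x) x := by
  rw [hasDerivAt_iff_tendsto_slope]
  refine (hφ.tendsto.mono_left nhdsWithin_le_nhds).congr' ?_
  filter_upwards [self_mem_nhdsWithin] with y hy
  rw [slope_def_field, sub_self, zero_mul, sub_zero,
    mul_div_cancel_left₀ _ (sub_ne_zero.mpr hy)]

theorem convergence_stability_at_zero_general
    (β c : ℝ)
    (g : ℝ → ℝ)
    (hg : ∀ k, g k = -Real.exp (-((k ^ 2 + (1 - k) ^ 3 * β ^ 2)
          / (4 * (2 * k ^ 2 - 2 * k + 1)) + c * k ^ 2)) *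
      (k * (1 - k) * (1 + β ^ 2 * (k - 1)) / (2 * (2 * k ^ 2 - 2 * k + 1) ^ 2)
        + 2 * c * k)) :
    HasDerivAt g (Real.exp (-β ^ 2 / 4) * (β ^ 2 - 1 - 4 * c) / 2) 0 ∧
    (Real.exp (-β ^ 2 / 4) * (β ^ 2 - 1 - 4 * c) / 2 < 0 ↔ (β ^ 2 - 1) / 4 < c) := by
  -- `g` vanishes at `0`, so `g'(0)` is the value at `0` of the cofactor `φ` in `g k = k * φ k`.
  set φ : ℝ → ℝ := fun k => -Real.exp (-((k ^ 2 + (1 - k) ^ 3 * β ^ 2)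
      / (4 * (2 * k ^ 2 - 2 * k + 1)) + c * k ^ 2)) *
      ((1 - k) * (1 + β ^ 2 * (k - 1)) / (2 * (2 * k ^ 2 - 2 * k + 1) ^ 2) + 2 * c)
  have hgφ : g = fun k => (k - 0) * φ k := funext fun k => by rw [hg]; ring
  have hφ : ContinuousAt φ 0 := by fun_prop (disch := simp)
  have hφ0 : φ 0 = Real.exp (-β ^ 2 / 4) * (β ^ 2 - 1 - 4 * c) / 2 := by
    norm_num [φ, neg_div]
    ring
  refine ⟨hgφ ▸ hφ0 ▸ hasDerivAt_sub_mul_of_continuousAt hφ, ?_⟩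
  rw [mul_div_assoc, ← smul_eq_mul, smul_neg_iff_of_pos_left (Real.exp_pos _)]
  constructor <;> intro h <;> linarith

/-- Convergence stability of the fully social singular strategy `k* = 0`: with
selection gradient
`g(k) = -exp(-G(k,k)) · ( k(1-k)(1+β²(k-1))/(2(2k²-2k+1)²) + 2ck )`, where
`G(k,k) = (k² + (1-k)³β²)/(4(2k²-2k+1)) + ck²`, the derivative of `g` at `0` is
`exp(-β²/4)·(β² - 1 - 4c)/2`; hence `g'(0) < 0` iff `c > (β² - 1)/4`. -/
theorem convergence_stability_at_zero
    (β c : ℝ) (hβ : 1 < β) (hc : 0 < c)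
    (g : ℝ → ℝ)
    (hg : ∀ k, g k = -Real.exp (-((k ^ 2 + (1 - k) ^ 3 * β ^ 2)
          / (4 * (2 * k ^ 2 - 2 * k + 1)) + c * k ^ 2)) *
      (k * (1 - k) * (1 + β ^ 2 * (k - 1)) / (2 * (2 * k ^ 2 - 2 * k + 1) ^ 2)
        + 2 * c * k)) :
    HasDerivAt g (Real.exp (-β ^ 2 / 4) * (β ^ 2 - 1 - 4 * c) / 2) 0 ∧
    (Real.exp (-β ^ 2 / 4) * (β ^ 2 - 1 - 4 * c) / 2 < 0 ↔ (β ^ 2 - 1) / 4 < c) :=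
  convergence_stability_at_zero_general β c g hg
end

section
/- In the migration model with strategy vector k, if k_i > 0 for every agent i, then the matrix M = -(K₁ + K₂L) is Hurwitz for any underlying graph Laplacian L; i.e., full positivity of investments guarantees the population can migrate regardless of network topology. -/
/-!
Row `i` of `K₁ + K₂ L` has diagonal entry `k_i² + (1 - k_i)² s_i`, with `s_i` the `i`-th row sum
of `A`, and off-diagonal entries of total absolute value `(1 - k_i)² s_i`. By Gershgorin every
eigenvalue of `M = -(K₁ + K₂ L)` therefore has real part at most `-k_i²` for some `i`.
-/

open Matrix

open Finset

namespace Matrix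

variable {n : Type*} [Fintype n] [DecidableEq n]

lemma hasEigenvalue_toLin'_of_mem_roots_charpoly {K : Type*} [Field K] {B : Matrix n n K} {μ : K}
    (h : μ ∈ B.charpoly.roots) : Module.End.HasEigenvalue (toLin' B) μ := by
  rw [Module.End.hasEigenvalue_iff_isRoot_charpoly, charpoly_toLin']
  exact Polynomial.isRoot_of_mem_roots h

lemma exists_re_le_of_mem_roots_charpoly {B : Matrix n n ℂ} {μ : ℂ} (h : μ ∈ B.charpoly.roots) :
    ∃ i, μ.re ≤ (B i i).re + ∑ j ∈ univ.erase i, ‖B i j‖ := by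
  obtain ⟨i, hi⟩ := eigenvalue_mem_ball (hasEigenvalue_toLin'_of_mem_roots_charpoly h)
  rw [Metric.mem_closedBall, Complex.dist_eq] at hi
  have hre : (μ - B i i).re ≤ ‖μ - B i i‖ := Complex.re_le_norm _
  rw [Complex.sub_re] at hre
  exact ⟨i, by linarith⟩

def rowLaplacian (A : Matrix n n ℝ) : Matrix n n ℝ :=
  diagonal (fun i => ∑ j, A i j) - A

lemma rowLaplacian_apply_self {A : Matrix n n ℝ} (hA : ∀ i, A i i = 0) (i : n) :
    rowLaplacian A i i = ∑ j, A i j := by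
  simp [rowLaplacian, hA i]

lemma rowLaplacian_apply_of_ne (A : Matrix n n ℝ) {i j : n} (hij : i ≠ j) :
    rowLaplacian A i j = -A i j := by
  simp [rowLaplacian, diagonal_apply_ne _ hij]

lemma diagonal_add_diagonal_mul_rowLaplacian_apply_self (a : n → ℝ) {b : n → ℝ} (hb : 0 ≤ b)
    {A : Matrix n n ℝ} (hA : ∀ i j, 0 ≤ A i j) (hAdiag : ∀ i, A i i = 0) (i : n) :
    (diagonal a + diagonal b * rowLaplacian A) i i
      = ∑ j ∈ univ.erase i, |(diagonal a + diagonal b * rowLaplacian A) i j| + a i := by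
  have hoff : ∀ j ∈ univ.erase i,
      |(diagonal a + diagonal b * rowLaplacian A) i j| = b i * A i j := by
    intro j hj
    have hij : i ≠ j := (ne_of_mem_erase hj).symm
    rw [add_apply, diagonal_mul, diagonal_apply_ne _ hij, rowLaplacian_apply_of_ne A hij, zero_add,
      mul_neg, abs_neg, abs_of_nonneg (mul_nonneg (hb i) (hA i j))]
  rw [sum_congr rfl hoff, ← mul_sum, sum_erase _ (hAdiag i), add_apply, diagonal_mul,
    diagonal_apply_eq, rowLaplacian_apply_self hAdiag, add_comm]

end Matrix

theorem isHurwitz_neg_of_sum_row_lt_diag {N : ℕ} {B : Matrix (Fin N) (Fin N) ℝ}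
    (h : ∀ i, ∑ j ∈ univ.erase i, |B i j| < B i i) : IsHurwitz (-B) := by
  intro μ hμ
  obtain ⟨i, hi⟩ := exists_re_le_of_mem_roots_charpoly hμ
  simp only [map_apply, Complex.ofReal_re, Complex.norm_real, Real.norm_eq_abs,
    Matrix.neg_apply, abs_neg] at hi
  linarith [h i]

theorem all_invested_implies_hurwitz_general
    (N : ℕ) (k : Fin N → ℝ) (hk0 : ∀ i, 0 < k i)
    (A L K₁ K₂ M : Matrix (Fin N) (Fin N) ℝ)
    (hApos : ∀ i j, 0 ≤ A i j) (hAdiag : ∀ i, A i i = 0)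
    (hL : L = Matrix.diagonal (fun i => ∑ j, A i j) - A)
    (hK₁ : K₁ = Matrix.diagonal (fun i => (k i) ^ 2))
    (hK₂ : K₂ = Matrix.diagonal (fun i => (1 - k i) ^ 2))
    (hM : M = -(K₁ + K₂ * L)) :
    IsHurwitz M := by
  have hL' : L = rowLaplacian A := hL
  subst hM hL' hK₁ hK₂
  refine isHurwitz_neg_of_sum_row_lt_diag fun i => ?_
  rw [diagonal_add_diagonal_mul_rowLaplacian_apply_self _ (fun i => sq_nonneg _) hApos hAdiag]
  exact lt_add_of_pos_right _ (pow_pos (hk0 i) 2)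

/-- If every agent has strictly positive investment `k_i > 0`, then
`M = -(K₁ + K₂ L)` is Hurwitz for any underlying (row-normalized) graph
Laplacian `L = diag(A·1) - A`: full positivity of investments guarantees the
population can migrate regardless of network topology. -/
theorem all_invested_implies_hurwitz
    (N : ℕ) (k : Fin N → ℝ) (hk0 : ∀ i, 0 < k i) (hk1 : ∀ i, k i ≤ 1)
    (A L K₁ K₂ M : Matrix (Fin N) (Fin N) ℝ)
    (hApos : ∀ i j, 0 ≤ A i j) (hAdiag : ∀ i, A i i = 0)
    (hArow : ∀ i, (∑ j, A i j = 0) ∨ (∑ j, A i j = 1))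
    (hL : L = Matrix.diagonal (fun i => ∑ j, A i j) - A)
    (hK₁ : K₁ = Matrix.diagonal (fun i => (k i) ^ 2))
    (hK₂ : K₂ = Matrix.diagonal (fun i => (1 - k i) ^ 2))
    (hM : M = -(K₁ + K₂ * L)) :
    IsHurwitz M :=
  all_invested_implies_hurwitz_general N k hk0 A L K₁ K₂ M hApos hAdiag hL hK₁ hK₂ hM
end
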